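/- arXiv:1112.3864 — 3 statements merged into one kernel-verified Lean document; each statement's English description precedes it below -/
import Mathlib

section
/- Suppose A and B are algebras such that the congruence lattice of A × B is modular. If φ₁ ≤ φ₂ are congruences on A and ψ is a congruence on B, then every congruence θ on A × B satisfying φ₁ × ψ ≤ θ ≤ φ₂ × ψ is a product congruence, i.e. θ = φ × ψ for some congruence φ on A with φ₁ ≤ φ ≤ φ₂. -/
/-- An algebraic signature: a type of operation symbols with finite arities. -/
structure Signature where
  ops : Type
  arity : ops → ℕ

/-- An algebra for a signature. -/
structure SAlgebra (S : Signature) where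
  carrier : Type
  interp : (o : S.ops) → (Fin (S.arity o) → carrier) → carrier

namespace SAlgebra

variable {S : Signature}

/-- Binary product of algebras. -/
def prod (A B : SAlgebra S) : SAlgebra S where
  carrier := A.carrier × B.carrier
  interp o x := (A.interp o fun i => (x i).1, B.interp o fun i => (x i).2)

/-- Product of a family of algebras. -/
def pi {ι : Type} (A : ι → SAlgebra S) : SAlgebra S where
  carrier := ∀ i, (A i).carrier
  interp o x i := (A i).interp o fun j => x j i

end SAlgebra

/-- Homomorphisms of algebras. -/
structure SHom {S : Signature} (A B : SAlgebra S) where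
  toFun : A.carrier → B.carrier
  map : ∀ (o : S.ops) (x : Fin (S.arity o) → A.carrier),
    toFun (A.interp o x) = B.interp o fun i => toFun (x i)

namespace SHom

variable {S : Signature}

/-- Composition of homomorphisms. -/
def comp {A B C : SAlgebra S} (g : SHom B C) (f : SHom A B) : SHom A C where
  toFun := g.toFun ∘ f.toFun
  map o x := by simp [Function.comp, f.map, g.map]

/-- The `i`-th projection of a product. -/
def proj {ι : Type} (A : ι → SAlgebra S) (i : ι) : SHom (SAlgebra.pi A) (A i) where
  toFun x := x i
  map _ _ := rfl

end SHom

/-- Congruences of an algebra. -/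
structure SCon {S : Signature} (A : SAlgebra S) where
  r : A.carrier → A.carrier → Prop
  iseqv : Equivalence r
  compat : ∀ (o : S.ops) (x y : Fin (S.arity o) → A.carrier),
    (∀ i, r (x i) (y i)) → r (A.interp o x) (A.interp o y)

namespace SCon

variable {S : Signature} {A : SAlgebra S}

instance : PartialOrder (SCon A) where
  le c d := ∀ x y, c.r x y → d.r x y
  le_refl _ _ _ h := h
  le_trans _ _ _ h h' x y hx := h' x y (h x y hx)
  le_antisymm a b h h' := by
    cases a; cases b
    have : ∀ x y : A.carrier, _ ↔ _ := fun x y => Iff.intro (h x y) (h' x y)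
    simp only [SCon.mk.injEq]
    funext x y
    exact propext (this x y)

instance : InfSet (SCon A) :=
  ⟨fun s =>
    { r := fun x y => ∀ c ∈ s, c.r x y
      iseqv := ⟨fun x c _ => c.iseqv.refl x, fun h c hc => c.iseqv.symm (h c hc),
        fun h1 h2 c hc => c.iseqv.trans (h1 c hc) (h2 c hc)⟩
      compat := fun o x y h c hc => c.compat o x y fun i => h i c hc }⟩

instance : CompleteLattice (SCon A) :=
  completeLatticeOfInf _ (fun s =>
    ⟨fun c hc x y h => h c hc, fun b hb x y h c hc => hb hc x y h⟩)

/-- Restriction (inverse image) of a congruence along a homomorphism. -/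
def comap {B : SAlgebra S} (f : SHom A B) (θ : SCon B) : SCon A where
  r x y := θ.r (f.toFun x) (f.toFun y)
  iseqv := ⟨fun _ => θ.iseqv.refl _, θ.iseqv.symm, θ.iseqv.trans⟩
  compat o x y h := by
    show θ.r (f.toFun (A.interp o x)) (f.toFun (A.interp o y))
    rw [f.map, f.map]
    exact θ.compat o _ _ h

/-- Product of two congruences. -/
def prodCon {A B : SAlgebra S} (φ : SCon A) (ψ : SCon B) : SCon (A.prod B) where
  r x y := φ.r x.1 y.1 ∧ ψ.r x.2 y.2
  iseqv := ⟨fun _ => ⟨φ.iseqv.refl _, ψ.iseqv.refl _⟩,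
    fun h => ⟨φ.iseqv.symm h.1, ψ.iseqv.symm h.2⟩,
    fun h h' => ⟨φ.iseqv.trans h.1 h'.1, ψ.iseqv.trans h.2 h'.2⟩⟩
  compat o x y h := ⟨φ.compat o _ _ fun i => (h i).1, ψ.compat o _ _ fun i => (h i).2⟩

/-- Product of a family of congruences. -/
def piCon {ι : Type} {A : ι → SAlgebra S} (φ : ∀ i, SCon (A i)) : SCon (SAlgebra.pi A) where
  r x y := ∀ i, (φ i).r (x i) (y i)
  iseqv := ⟨fun _ i => (φ i).iseqv.refl _, fun h i => (φ i).iseqv.symm (h i),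
    fun h h' i => (φ i).iseqv.trans (h i) (h' i)⟩
  compat o x y h i := (φ i).compat o _ _ fun j => h j i

end SCon

/-- Terms in `n` variables over a signature. -/
inductive STerm (S : Signature) : ℕ → Type where
  | var : {n : ℕ} → Fin n → STerm S n
  | app : {n : ℕ} → (o : S.ops) → (Fin (S.arity o) → STerm S n) → STerm S n

/-- Evaluation of a term in an algebra. -/
def STerm.eval {S : Signature} (A : SAlgebra S) {n : ℕ} : STerm S n → (Fin n → A.carrier) → A.carrier
  | .var i, x => x i
  | .app o t, x => A.interp o fun j => (t j).eval A x

/-- The term-condition centralizer relation `C(α, β; δ)`. -/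
def Centralizes {S : Signature} (A : SAlgebra S) (α β δ : SCon A) : Prop :=
  ∀ (n m : ℕ) (t : STerm S (n + m)) (a b : Fin n → A.carrier) (u v : Fin m → A.carrier),
    (∀ i, α.r (a i) (b i)) → (∀ j, β.r (u j) (v j)) →
    δ.r (t.eval A (Fin.append a u)) (t.eval A (Fin.append a v)) →
    δ.r (t.eval A (Fin.append b u)) (t.eval A (Fin.append b v))

/-- The commutator `[α, β]`: the least congruence `δ` with `C(α, β; δ)`. -/
def conCommutator {S : Signature} (A : SAlgebra S) (α β : SCon A) : SCon A :=
  sInf {δ | Centralizes A α β δ}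

/-- The center of an algebra: the largest central congruence. -/
def conCenter {S : Signature} (A : SAlgebra S) : SCon A :=
  sSup {θ | conCommutator A θ ⊤ = ⊥}

/-- A class of algebras is a variety iff it is closed under subalgebras
(isomorphic copies included), homomorphic images and products. -/
def IsVariety {S : Signature} (V : SAlgebra S → Prop) : Prop :=
  (∀ (A B : SAlgebra S) (e : SHom A B), Function.Injective e.toFun → V B → V A) ∧
  (∀ (A B : SAlgebra S) (p : SHom A B), Function.Surjective p.toFun → V A → V B) ∧
  (∀ (ι : Type) (A : ι → SAlgebra S), (∀ i, V (A i)) → V (SAlgebra.pi A))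

/-- A congruence modular variety. -/
def IsCongruenceModularVariety {S : Signature} (V : SAlgebra S → Prop) : Prop :=
  IsVariety V ∧ ∀ A : SAlgebra S, V A → IsModularLattice (SCon A)

/-- A Gumm difference term for the class `V`:  `d(x,y,y) = x` holds identically,
and `d(x,x,y) = y` whenever `x θ y` for an abelian congruence `θ`. -/
def IsGummDifferenceTerm {S : Signature} (V : SAlgebra S → Prop) (d : STerm S 3) : Prop :=
  (∀ A : SAlgebra S, V A → ∀ x y : A.carrier, d.eval A ![x, y, y] = x) ∧
  (∀ A : SAlgebra S, V A → ∀ θ : SCon A, conCommutator A θ θ = ⊥ →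
    ∀ x y : A.carrier, θ.r x y → d.eval A ![x, x, y] = y)

/-- `R` is an absolute retract in `V`: every embedding of `R` into a member of `V`
admits a retraction. -/
def IsAbsoluteRetract {S : Signature} (V : SAlgebra S → Prop) (R : SAlgebra S) : Prop :=
  ∀ A : SAlgebra S, V A → ∀ e : SHom R A, Function.Injective e.toFun →
    ∃ p : SHom A R, ∀ x, p.toFun (e.toFun x) = x

/-- An embedding is essential iff every congruence of the codomain restricting
trivially is trivial. -/
def IsEssential {S : Signature} {A B : SAlgebra S} (e : SHom A B) : Prop :=
  ∀ θ : SCon B, SCon.comap e θ = ⊥ → θ = ⊥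

/-- A congruence `α` is dense: any congruence meeting it trivially is trivial. -/
def DenseCon {S : Signature} {A : SAlgebra S} (α : SCon A) : Prop :=
  ∀ θ : SCon A, θ ⊓ α = ⊥ → θ = ⊥

/-- The setoid underlying a congruence. -/
def SCon.setoid {S : Signature} {A : SAlgebra S} (θ : SCon A) : Setoid A.carrier :=
  ⟨θ.r, θ.iseqv⟩

/-- Quotient algebra. -/
noncomputable def SAlgebra.quot {S : Signature} (A : SAlgebra S) (θ : SCon A) : SAlgebra S where
  carrier := Quotient θ.setoid
  interp o x := Quotient.mk θ.setoid (A.interp o fun i => (x i).out)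

theorem SCon.out_rel {S : Signature} {A : SAlgebra S} (θ : SCon A) (a : A.carrier) :
    θ.r (Quotient.out (Quotient.mk θ.setoid a)) a :=
  @Quotient.exact _ θ.setoid _ _ (Quotient.out_eq _)

/-- The canonical quotient homomorphism. -/
def SHom.quotHom {S : Signature} (A : SAlgebra S) (θ : SCon A) : SHom A (A.quot θ) where
  toFun := Quotient.mk θ.setoid
  map o x := Quotient.sound (θ.compat o _ _ fun i => θ.iseqv.symm (θ.out_rel (x i)))

/-- Product map of a family of homomorphisms. -/
def SHom.piMap {S : Signature} {ι : Type} {A B : ι → SAlgebra S} (f : ∀ i, SHom (A i) (B i)) :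
    SHom (SAlgebra.pi A) (SAlgebra.pi B) where
  toFun x i := (f i).toFun (x i)
  map o x := funext fun i => (f i).map o fun j => x j i

/-- The congruence `φ/θ` on the quotient `A/θ`, for `θ ≤ φ`. -/
def SCon.quotCon {S : Signature} {A : SAlgebra S} (θ φ : SCon A) (h : θ ≤ φ) :
    SCon (A.quot θ) where
  r a b := φ.r a.out b.out
  iseqv := ⟨fun _ => φ.iseqv.refl _, φ.iseqv.symm, φ.iseqv.trans⟩
  compat o x y hxy := by
    have hx := h _ _ (θ.out_rel (A.interp o fun i => (x i).out))
    have hy := h _ _ (θ.out_rel (A.interp o fun i => (y i).out))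
    exact φ.iseqv.trans hx (φ.iseqv.trans (φ.compat o _ _ hxy) (φ.iseqv.symm hy))

/-- Finitely subdirectly irreducible: `⊥` is meet irreducible in the congruence lattice. -/
def IsFSI {S : Signature} (A : SAlgebra S) : Prop :=
  ∀ θ φ : SCon A, θ ⊓ φ = ⊥ → θ = ⊥ ∨ φ = ⊥

/-- Subdirectly irreducible: the congruence lattice has a monolith. -/
def IsSubdirectlyIrreducible {S : Signature} (A : SAlgebra S) : Prop :=
  ∃ μ : SCon A, μ ≠ ⊥ ∧ ∀ θ : SCon A, θ ≠ ⊥ → μ ≤ θ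

/-! Enlarge `θ` to `δ = θ ⊔ (φ₁ × 1)`. Since `δ` contains the kernel `0 × 1` of the first
projection, it is a product `φ × 1`. As `θ ≤ φ₂ × ψ`, modularity gives
`δ ⊓ (φ₂ × ψ) = θ ⊔ ((φ₁ × 1) ⊓ (φ₂ × ψ)) = θ ⊔ (φ₁ × ψ) = θ`, hence `θ = (φ ⊓ φ₂) × ψ`. -/

namespace SCon

variable {S : Signature} {A B : SAlgebra S}

theorem r_top (x y : A.carrier) : (⊤ : SCon A).r x y :=
  fun _ h => h.elim

theorem r_inf {φ φ' : SCon A} {x y : A.carrier} : (φ ⊓ φ').r x y ↔ φ.r x y ∧ φ'.r x y :=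
  ⟨fun h => ⟨inf_le_left (b := φ') x y h, inf_le_right (a := φ) x y h⟩,
    fun ⟨h, h'⟩ => by rintro c (rfl | rfl) <;> assumption⟩

theorem prodCon_mono {φ φ' : SCon A} {ψ ψ' : SCon B} (hφ : φ ≤ φ') (hψ : ψ ≤ ψ') :
    prodCon φ ψ ≤ prodCon φ' ψ' :=
  fun _ _ h => ⟨hφ _ _ h.1, hψ _ _ h.2⟩

theorem prodCon_inf_prodCon (φ φ' : SCon A) (ψ ψ' : SCon B) :
    prodCon φ ψ ⊓ prodCon φ' ψ' = prodCon (φ ⊓ φ') (ψ ⊓ ψ') :=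
  le_antisymm (fun _ _ h => ⟨r_inf.2 ⟨(r_inf.1 h).1.1, (r_inf.1 h).2.1⟩,
      r_inf.2 ⟨(r_inf.1 h).1.2, (r_inf.1 h).2.2⟩⟩)
    (le_inf (prodCon_mono inf_le_left inf_le_left) (prodCon_mono inf_le_right inf_le_right))

theorem r_of_prodCon_bot_top_le {δ : SCon (A.prod B)} (hδ : prodCon ⊥ ⊤ ≤ δ)
    (a : A.carrier) (b b' : B.carrier) : δ.r (a, b) (a, b') :=
  hδ _ _ ⟨(⊥ : SCon A).iseqv.refl a, r_top b b'⟩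

def fst (δ : SCon (A.prod B)) (hδ : prodCon ⊥ ⊤ ≤ δ) : SCon A where
  r a a' := ∀ b b', δ.r (a, b) (a', b')
  iseqv := ⟨fun a => r_of_prodCon_bot_top_le hδ a, fun h b b' => δ.iseqv.symm (h b' b),
    fun h h' b b' => δ.iseqv.trans (h b b) (h' b b')⟩
  compat o x y h b b' := by
    have hxy : δ.r (A.interp o x, B.interp o fun _ => b) (A.interp o y, B.interp o fun _ => b) :=
      δ.compat o (fun i => (x i, b)) (fun i => (y i, b)) fun i => h i b b
    exact δ.iseqv.trans (r_of_prodCon_bot_top_le hδ _ _ _)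
      (δ.iseqv.trans hxy (r_of_prodCon_bot_top_le hδ _ _ _))

theorem prodCon_fst_top (δ : SCon (A.prod B)) (hδ : prodCon ⊥ ⊤ ≤ δ) :
    prodCon (δ.fst hδ) ⊤ = δ := by
  refine le_antisymm (fun x y h => h.1 x.2 y.2) fun x y h => ⟨fun b b' => ?_, r_top _ _⟩
  exact δ.iseqv.trans (r_of_prodCon_bot_top_le hδ _ _ _)
    (δ.iseqv.trans h (r_of_prodCon_bot_top_le hδ _ _ _))

theorem le_fst {δ : SCon (A.prod B)} (hδ : prodCon ⊥ ⊤ ≤ δ) {φ : SCon A}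
    (h : prodCon φ ⊤ ≤ δ) : φ ≤ δ.fst hδ :=
  fun _ _ ha b b' => h _ _ ⟨ha, r_top b b'⟩

end SCon

/-- If `Con(A × B)` is modular, `φ₁ ≤ φ₂` are congruences on `A` and `ψ` is a congruence
on `B`, then every congruence `θ` on `A × B` with `φ₁ × ψ ≤ θ ≤ φ₂ × ψ` is a product
congruence `φ × ψ` with `φ₁ ≤ φ ≤ φ₂`. -/
theorem product_congruence_lemma {S : Signature} (A B : SAlgebra S)
    (hmod : IsModularLattice (SCon (A.prod B)))
    (φ₁ φ₂ : SCon A) (hφ : φ₁ ≤ φ₂) (ψ : SCon B) (θ : SCon (A.prod B))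
    (h1 : SCon.prodCon φ₁ ψ ≤ θ) (h2 : θ ≤ SCon.prodCon φ₂ ψ) :
    ∃ φ : SCon A, φ₁ ≤ φ ∧ φ ≤ φ₂ ∧ θ = SCon.prodCon φ ψ := by
  set δ := θ ⊔ SCon.prodCon φ₁ ⊤
  have hδ : SCon.prodCon ⊥ ⊤ ≤ δ := (SCon.prodCon_mono bot_le le_rfl).trans le_sup_right
  refine ⟨δ.fst hδ ⊓ φ₂, le_inf (SCon.le_fst hδ le_sup_right) hφ, inf_le_right, ?_⟩
  calc θ = θ ⊔ SCon.prodCon φ₁ ψ := (sup_eq_left.2 h1).symm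
    _ = θ ⊔ SCon.prodCon φ₁ ⊤ ⊓ SCon.prodCon φ₂ ψ := by
      rw [SCon.prodCon_inf_prodCon, inf_eq_left.2 hφ, top_inf_eq]
    _ = δ ⊓ SCon.prodCon φ₂ ψ := (@sup_inf_assoc_of_le _ _ hmod _ _ _ h2).symm
    _ = SCon.prodCon (δ.fst hδ) ⊤ ⊓ SCon.prodCon φ₂ ψ := by rw [SCon.prodCon_fst_top]
    _ = SCon.prodCon (δ.fst hδ ⊓ φ₂) ψ := by rw [SCon.prodCon_inf_prodCon, top_inf_eq]
end

section
/- Let A and B be algebras such that Con(A × B) is a modular lattice. If α is a dense congruence on A and β is a dense congruence on B, then the product congruence α × β is dense on A × B. -/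
/-!
Write `α × β` as `fst⁻¹ α ⊓ snd⁻¹ β`. Meets of dense congruences are dense, so it suffices
that the preimage of a dense congruence `β` under a surjective homomorphism `f` is dense.
If `δ ⊓ f⁻¹ β = ⊥`, modularity (with `ker f ≤ f⁻¹ β`) gives `(ker f ⊔ δ) ⊓ f⁻¹ β = ker f`.
Hence the image `ψ` of `ker f ⊔ δ` meets `β` trivially, so `ψ = ⊥` by density, i.e.
`δ ≤ ker f ≤ f⁻¹ β`, and then `δ = δ ⊓ f⁻¹ β = ⊥`.
-/

namespace SCon

variable {S : Signature} {A B : SAlgebra S}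

theorem ext {θ φ : SCon A} (h : ∀ x y, θ.r x y ↔ φ.r x y) : θ = φ :=
  le_antisymm (fun x y => (h x y).1) (fun x y => (h x y).2)

theorem bot_r_iff {x y : A.carrier} : (⊥ : SCon A).r x y ↔ x = y where
  mp h := h ⟨(· = ·), eq_equivalence, fun _ _ _ h => congrArg _ (funext h)⟩ trivial
  mpr h := h ▸ (⊥ : SCon A).iseqv.refl x

theorem inf_r_iff {θ φ : SCon A} {x y : A.carrier} : (θ ⊓ φ).r x y ↔ θ.r x y ∧ φ.r x y where
  mp h := ⟨(inf_le_left : θ ⊓ φ ≤ θ) x y h, (inf_le_right : θ ⊓ φ ≤ φ) x y h⟩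
  mpr h c hc := by rcases hc with rfl | rfl; exacts [h.1, h.2]

theorem eq_bot_of_isEmpty [IsEmpty A.carrier] (θ : SCon A) : θ = ⊥ :=
  le_bot_iff.mp fun x => isEmptyElim x

theorem comap_mono (f : SHom A B) {θ φ : SCon B} (h : θ ≤ φ) : comap f θ ≤ comap f φ :=
  fun x y => h (f.toFun x) (f.toFun y)

theorem comap_inf (f : SHom A B) (θ φ : SCon B) : comap f (θ ⊓ φ) = comap f θ ⊓ comap f φ :=
  ext fun x y => by
    show (θ ⊓ φ).r _ _ ↔ _
    rw [inf_r_iff, inf_r_iff]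
    rfl

theorem comap_injective {f : SHom A B} (hf : Function.Surjective f.toFun) :
    Function.Injective (comap f) := fun θ φ h => ext fun x y => by
  obtain ⟨a, rfl⟩ := hf x
  obtain ⟨a', rfl⟩ := hf y
  exact Iff.of_eq (congrArg (fun c : SCon A => c.r a a') h)

def map {f : SHom A B} (hf : Function.Surjective f.toFun) (ζ : SCon A)
    (hζ : comap f ⊥ ≤ ζ) : SCon B where
  r b b' := ∃ a a', f.toFun a = b ∧ f.toFun a' = b' ∧ ζ.r a a'
  iseqv :=
    { refl b := let ⟨a, ha⟩ := hf b; ⟨a, a, ha, ha, ζ.iseqv.refl a⟩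
      symm := fun ⟨a, a', ha, ha', h⟩ => ⟨a', a, ha', ha, ζ.iseqv.symm h⟩
      trans := fun ⟨a₁, a₂, h₁, h₂, h⟩ ⟨a₃, a₄, h₃, h₄, h'⟩ =>
        have h₂₃ : ζ.r a₂ a₃ := hζ a₂ a₃ (bot_r_iff.mpr (h₂.trans h₃.symm))
        ⟨a₁, a₄, h₁, h₄, ζ.iseqv.trans h (ζ.iseqv.trans h₂₃ h')⟩ }
  compat o x y h := by
    choose a a' ha ha' hr using h
    refine ⟨A.interp o a, A.interp o a', ?_, ?_, ζ.compat o a a' hr⟩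
    · rw [f.map]; exact congrArg _ (funext ha)
    · rw [f.map]; exact congrArg _ (funext ha')

theorem comap_map {f : SHom A B} (hf : Function.Surjective f.toFun) (ζ : SCon A)
    (hζ : comap f ⊥ ≤ ζ) : comap f (map hf ζ hζ) = ζ :=
  ext fun x y =>
    ⟨fun ⟨a, a', ha, ha', h⟩ => ζ.iseqv.trans (ζ.iseqv.symm (hζ a x (bot_r_iff.mpr ha)))
      (ζ.iseqv.trans h (hζ a' y (bot_r_iff.mpr ha'))), fun h => ⟨x, y, rfl, rfl, h⟩⟩

end SCon

namespace SHom

variable {S : Signature} {A B : SAlgebra S}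

def fst : SHom (A.prod B) A where
  toFun := Prod.fst
  map _ _ := rfl

def snd : SHom (A.prod B) B where
  toFun := Prod.snd
  map _ _ := rfl

theorem fst_surjective (b : B.carrier) : Function.Surjective (fst : SHom (A.prod B) A).toFun :=
  fun a => ⟨(a, b), rfl⟩

theorem snd_surjective (a : A.carrier) : Function.Surjective (snd : SHom (A.prod B) B).toFun :=
  fun b => ⟨(a, b), rfl⟩

end SHom

theorem SCon.prodCon_eq_inf {S : Signature} {A B : SAlgebra S} (α : SCon A) (β : SCon B) :
    prodCon α β = comap SHom.fst α ⊓ comap SHom.snd β :=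
  ext fun _ _ => by rw [inf_r_iff]; rfl

namespace DenseCon

variable {S : Signature} {A B : SAlgebra S}

theorem inf {α β : SCon A} (hα : DenseCon α) (hβ : DenseCon β) : DenseCon (α ⊓ β) :=
  fun θ h => hα θ (hβ _ (by rwa [inf_assoc]))

theorem comap_of_surjective [IsModularLattice (SCon A)] {f : SHom A B}
    (hf : Function.Surjective f.toFun) {β : SCon B} (hβ : DenseCon β) :
    DenseCon (SCon.comap f β) := by
  intro δ hδ
  have hker : SCon.comap f ⊥ ≤ SCon.comap f β := SCon.comap_mono f bot_le
  set ζ := SCon.comap f ⊥ ⊔ δ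
  have hζ : SCon.comap f ⊥ ≤ ζ := le_sup_left
  have hζβ : ζ ⊓ SCon.comap f β = SCon.comap f ⊥ := by
    rw [sup_inf_assoc_of_le δ hker, hδ, sup_bot_eq]
  have hψ : SCon.map hf ζ hζ ⊓ β = ⊥ :=
    SCon.comap_injective hf (by rw [SCon.comap_inf, SCon.comap_map, hζβ])
  have hζ_ker : ζ = SCon.comap f ⊥ := by rw [← SCon.comap_map hf ζ hζ, hβ _ hψ]
  have hδβ : δ ≤ SCon.comap f β := le_sup_right.trans (hζ_ker.le.trans hker)
  rwa [inf_eq_left.mpr hδβ] at hδ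

end DenseCon

/-- If `Con(A × B)` is modular and `α`, `β` are dense congruences on `A` and `B`
respectively, then `α × β` is dense on `A × B`. -/
theorem prod_dense {S : Signature} (A B : SAlgebra S)
    (hmod : IsModularLattice (SCon (A.prod B)))
    (α : SCon A) (β : SCon B) (hα : DenseCon α) (hβ : DenseCon β) :
    DenseCon (SCon.prodCon α β) := by
  rcases isEmpty_or_nonempty (A.prod B).carrier with hAB | ⟨a, b⟩
  · exact fun θ _ => SCon.eq_bot_of_isEmpty θ
  rw [SCon.prodCon_eq_inf]
  exact (hα.comap_of_surjective (SHom.fst_surjective b)).inf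
    (hβ.comap_of_surjective (SHom.snd_surjective a))
end

section
/- An algebra R in a variety V is an absolute retract in V if and only if R has no proper essential extensions in V. -/
/-!
If `R` is a retract of an essential extension `B`, the kernel of the retraction meets `R`
trivially, hence is trivial, so `B = R`. Conversely, given an embedding `R ≤ A`, choose by
Zorn a congruence `θ` of `A` maximal among those meeting `R` trivially. Maximality makes
`R → A/θ` an essential embedding, so by hypothesis it is onto, and `A → A/θ ≅ R` is the
required retraction.
-/

namespace SCon

variable {S : Signature} {A B : SAlgebra S}

theorem rel_bot_iff {x y : A.carrier} : (⊥ : SCon A).r x y ↔ x = y := by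
  refine ⟨fun h => ?_, fun h => h ▸ (⊥ : SCon A).iseqv.refl x⟩
  let diag : SCon A := ⟨Eq, eq_equivalence, fun _ _ _ h => congrArg _ (funext h)⟩
  exact (bot_le : ⊥ ≤ diag) x y h

theorem eq_bot_iff_forall_rel {θ : SCon A} : θ = ⊥ ↔ ∀ x y, θ.r x y → x = y :=
  ⟨fun h _ _ hxy => rel_bot_iff.1 (h ▸ hxy),
    fun h => le_bot_iff.1 fun x y hxy => rel_bot_iff.2 (h x y hxy)⟩

def ker (f : SHom A B) : SCon A where
  r x y := f.toFun x = f.toFun y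
  iseqv := ⟨fun _ => rfl, Eq.symm, Eq.trans⟩
  compat o x y h := by rw [f.map, f.map, funext h]

theorem ker_eq_bot_iff {f : SHom A B} : ker f = ⊥ ↔ Function.Injective f.toFun :=
  eq_bot_iff_forall_rel

theorem comap_ker {C : SAlgebra S} (e : SHom A B) (p : SHom B C) :
    comap e (ker p) = ker (p.comp e) :=
  rfl

theorem ker_le_comap (f : SHom A B) (ψ : SCon B) : ker f ≤ comap f ψ :=
  fun x y h => show ψ.r (f.toFun x) (f.toFun y) from h ▸ ψ.iseqv.refl _

theorem ker_quotHom (θ : SCon A) : ker (SHom.quotHom A θ) = θ :=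
  le_antisymm (fun _ _ h => Quotient.exact h) (fun _ _ h => Quotient.sound h)

def directedSup (c : Set (SCon A)) (hne : c.Nonempty) (hc : DirectedOn (· ≤ ·) c) :
    SCon A where
  r x y := ∃ θ ∈ c, θ.r x y
  iseqv := by
    obtain ⟨θ₀, hθ₀⟩ := hne
    refine ⟨fun x => ⟨θ₀, hθ₀, θ₀.iseqv.refl x⟩,
      fun ⟨θ, hθ, h⟩ => ⟨θ, hθ, θ.iseqv.symm h⟩, ?_⟩
    rintro x y z ⟨θ₁, h₁, hxy⟩ ⟨θ₂, h₂, hyz⟩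
    obtain ⟨θ, hθ, hle₁, hle₂⟩ := hc θ₁ h₁ θ₂ h₂
    exact ⟨θ, hθ, θ.iseqv.trans (hle₁ _ _ hxy) (hle₂ _ _ hyz)⟩
  compat o x y h := by
    classical
    choose g hg hgr using h
    have : Nonempty c := hne.to_subtype
    obtain ⟨⟨θ, hθ⟩, hle⟩ :=
      hc.directed_val.finset_le (Finset.univ.image fun i => (⟨g i, hg i⟩ : c))
    have hgθ i : g i ≤ θ := hle ⟨g i, hg i⟩ (Finset.mem_image_of_mem _ (Finset.mem_univ i))
    exact ⟨θ, hθ, θ.compat o x y fun i => hgθ i _ _ (hgr i)⟩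

theorem le_directedSup {c : Set (SCon A)} (hne : c.Nonempty) (hc : DirectedOn (· ≤ ·) c)
    {θ : SCon A} (hθ : θ ∈ c) : θ ≤ directedSup c hne hc :=
  fun _ _ h => ⟨θ, hθ, h⟩

theorem exists_maximal_comap_eq_bot {e : SHom A B} (he : Function.Injective e.toFun) :
    ∃ θ : SCon B, Maximal (fun θ => comap e θ = ⊥) θ := by
  obtain ⟨θ, -, hθ⟩ := zorn_le_nonempty₀ {θ : SCon B | comap e θ = ⊥}
    (fun c hcs hc θ hθ => by
      refine ⟨directedSup c ⟨θ, hθ⟩ hc.directedOn, ?_, fun _ => le_directedSup _ _⟩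
      refine eq_bot_iff_forall_rel.2 fun x y ⟨ψ, hψ, hxy⟩ => ?_
      exact eq_bot_iff_forall_rel.1 (hcs hψ) x y hxy)
    ⊥ (eq_bot_iff_forall_rel.2 fun x y h => he (rel_bot_iff.1 h))
  exact ⟨θ, hθ⟩

end SCon

namespace IsEssential

variable {S : Signature} {A B C : SAlgebra S} {e : SHom A B}

theorem injective_of_injective_comp (he : IsEssential e) {p : SHom B C}
    (hp : Function.Injective (p.comp e).toFun) : Function.Injective p.toFun :=
  SCon.ker_eq_bot_iff.1 (he _ (SCon.ker_eq_bot_iff.2 hp))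

theorem surjective_of_leftInverse (he : IsEssential e) {p : SHom B A}
    (hp : Function.LeftInverse p.toFun e.toFun) : Function.Surjective e.toFun :=
  have hpe : Function.Injective (p.comp e).toFun := fun x y h =>
    (hp x).symm.trans (h.trans (hp y))
  (hp.rightInverse_of_injective (he.injective_of_injective_comp hpe)).surjective

end IsEssential

namespace SHom

variable {S : Signature} {A B : SAlgebra S}

theorem quotHom_surjective (θ : SCon A) : Function.Surjective (quotHom A θ).toFun :=
  Quotient.mk_surjective

theorem injective_quotHom_comp {e : SHom A B} {θ : SCon B} (hθ : SCon.comap e θ = ⊥) :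
    Function.Injective ((quotHom B θ).comp e).toFun := by
  rw [← SCon.ker_eq_bot_iff, ← SCon.comap_ker, SCon.ker_quotHom, hθ]

theorem isEssential_quotHom_comp {e : SHom A B} {θ : SCon B}
    (hθ : Maximal (fun θ => SCon.comap e θ = ⊥) θ) : IsEssential ((quotHom B θ).comp e) := by
  intro ψ hψ
  have hle : θ ≤ SCon.comap (quotHom B θ) ψ := by
    simpa only [SCon.ker_quotHom] using SCon.ker_le_comap (quotHom B θ) ψ
  have hψθ : SCon.comap (quotHom B θ) ψ ≤ θ := hθ.2 hψ hle
  refine SCon.eq_bot_iff_forall_rel.2 fun a b hab => ?_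
  obtain ⟨x, rfl⟩ := quotHom_surjective θ a
  obtain ⟨y, rfl⟩ := quotHom_surjective θ b
  exact Quotient.sound (hψθ x y hab)

noncomputable def invOfBijective (f : SHom A B) (hf : Function.Bijective f.toFun) : SHom B A where
  toFun := Function.surjInv hf.2
  map o x := hf.1 <| by
    simp only [f.map, Function.surjInv_eq hf.2]

theorem invOfBijective_leftInverse (f : SHom A B) (hf : Function.Bijective f.toFun) :
    Function.LeftInverse (f.invOfBijective hf).toFun f.toFun :=
  Function.leftInverse_surjInv hf

end SHom

theorem absoluteRetract_iff_no_proper_essential_extension_general {S : Signature}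
    (V : SAlgebra S → Prop) (hV : IsVariety V) (R : SAlgebra S) :
    IsAbsoluteRetract V R ↔
      ¬ ∃ (B : SAlgebra S) (e : SHom R B), V B ∧ Function.Injective e.toFun ∧
          IsEssential e ∧ ¬ Function.Surjective e.toFun := by
  constructor
  · rintro hR ⟨B, e, hB, he, hess, hns⟩
    obtain ⟨p, hp⟩ := hR B hB e he
    exact hns (hess.surjective_of_leftInverse hp)
  · intro hno A hA e he
    obtain ⟨θ, hθ⟩ := SCon.exists_maximal_comap_eq_bot he
    let q := SHom.quotHom A θ
    have hinj := SHom.injective_quotHom_comp hθ.1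
    have hsurj : Function.Surjective (q.comp e).toFun := by
      by_contra hns
      exact hno ⟨A.quot θ, q.comp e, hV.2.1 A _ q (SHom.quotHom_surjective θ) hA, hinj,
        SHom.isEssential_quotHom_comp hθ, hns⟩
    exact ⟨((q.comp e).invOfBijective ⟨hinj, hsurj⟩).comp q,
      (q.comp e).invOfBijective_leftInverse ⟨hinj, hsurj⟩⟩

/-- An algebra `R` in a variety `V` is an absolute retract in `V` iff `R` has no proper
essential extensions in `V`. -/
theorem absoluteRetract_iff_no_proper_essential_extension {S : Signature}
    (V : SAlgebra S → Prop) (hV : IsVariety V) (R : SAlgebra S) (hR : V R) :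
    IsAbsoluteRetract V R ↔
      ¬ ∃ (B : SAlgebra S) (e : SHom R B), V B ∧ Function.Injective e.toFun ∧
          IsEssential e ∧ ¬ Function.Surjective e.toFun :=
  absoluteRetract_iff_no_proper_essential_extension_general V hV R
end
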